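/- Correctness of the space-efficient parallel algorithm (Theorem 1): let G be a finite simple graph with degree-based ordering ≺, and let V₀, V₁, …, V_{P−1} be pairwise disjoint subsets of V whose union is V. For each index i, let processor i's count be T_i = Σ_{v∈V} Σ_{u ∈ N_v ∩ V_i} |N_v ∩ N_u| (processor i counts the triangles on each oriented pair (v,u) with u ∈ N_v whose higher-ordered endpoint u lies in V_i). Then Σ_{i=0}^{P−1} T_i equals the exact number of triangles in G. -/
import Mathlib


/-- Degree-based ordering: `u ≺ v` iff `deg u < deg v`, or degrees equal and `u < v`. -/
def degPrec {V : Type*} [Fintype V] [LinearOrder V] (G : SimpleGraph V) [DecidableRel G.Adj]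
    (u v : V) : Prop :=
  G.degree u < G.degree v ∨ (G.degree u = G.degree v ∧ u < v)

instance {V : Type*} [Fintype V] [LinearOrder V] (G : SimpleGraph V) [DecidableRel G.Adj] :
    DecidableRel (degPrec G) := fun u v => by unfold degPrec; infer_instance

/-- `N_v`: the neighbors of `v` that come after `v` in the degree-based ordering. -/
def Nout {V : Type*} [Fintype V] [LinearOrder V] (G : SimpleGraph V) [DecidableRel G.Adj]
    (v : V) : Finset V :=
  (G.neighborFinset v).filter (fun u => degPrec G v u)

section Helpers
variable {V : Type*} [Fintype V] [LinearOrder V] (G : SimpleGraph V) [DecidableRel G.Adj]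
open Finset

lemma degPrec_trans {u v w : V} (h1 : degPrec G u v) (h2 : degPrec G v w) : degPrec G u w := by
  unfold degPrec at *
  rcases h1 with h|⟨h,h'⟩ <;> rcases h2 with g|⟨g,g'⟩ <;>
    first | (left; omega) | (right; exact ⟨by omega, lt_trans h' g'⟩)

lemma degPrec_irrefl {u : V} (h : degPrec G u u) : False := by
  unfold degPrec at h; rcases h with h|⟨_,h⟩ <;> exact absurd h (lt_irrefl _)

lemma degPrec_asymm {u v : V} (h1 : degPrec G u v) (h2 : degPrec G v u) : False :=
  degPrec_irrefl G (degPrec_trans G h1 h2)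

lemma degPrec_total {u v : V} (h : u ≠ v) : degPrec G u v ∨ degPrec G v u := by
  unfold degPrec
  rcases lt_trichotomy (G.degree u) (G.degree v) with h1|h1|h1
  · exact Or.inl (Or.inl h1)
  · rcases lt_or_gt_of_ne h with h2|h2
    · exact Or.inl (Or.inr ⟨h1, h2⟩)
    · exact Or.inr (Or.inr ⟨h1.symm, h2⟩)
  · exact Or.inr (Or.inl h1)

lemma degPrec_ne {u v : V} (h : degPrec G u v) : u ≠ v := by
  rintro rfl; exact degPrec_irrefl G h

lemma triple_eq {a b c a' b' c' : V} (hab : degPrec G a b) (hbc : degPrec G b c)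
    (h'ab : degPrec G a' b') (h'bc : degPrec G b' c')
    (h : ({a, b, c} : Finset V) = {a', b', c'}) : a = a' ∧ b = b' ∧ c = c' := by
  have hac := degPrec_trans G hab hbc
  have h'ac := degPrec_trans G h'ab h'bc
  have ha' : a' = a ∨ a' = b ∨ a' = c := by
    have : a' ∈ ({a,b,c} : Finset V) := h ▸ (by simp)
    simpa using this
  have ha : a = a' ∨ a = b' ∨ a = c' := by
    have : a ∈ ({a',b',c'} : Finset V) := h ▸ (by simp)
    simpa using this
  have haa : a = a' := by
    rcases ha with h1|h1|h1
    · exact h1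
    all_goals {
      rcases ha' with h2|h2|h2
      · exact h2.symm
      all_goals { exfalso; subst h1; subst h2
                  first
                  | exact degPrec_asymm G hab h'ab
                  | exact degPrec_asymm G hab h'ac
                  | exact degPrec_asymm G hac h'ab
                  | exact degPrec_asymm G hac h'ac }
    }
  subst haa
  have hc' : c' = a ∨ c' = b ∨ c' = c := by
    have : c' ∈ ({a,b,c} : Finset V) := h ▸ (by simp)
    simpa using this
  have hc : c = a ∨ c = b' ∨ c = c' := by
    have : c ∈ ({a,b',c'} : Finset V) := h ▸ (by simp)
    simpa using this
  have hcc : c = c' := by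
    rcases hc with h1|h1|h1
    · exact absurd h1.symm (degPrec_ne G hac)
    · rcases hc' with h2|h2|h2
      · exfalso; rw [h2] at h'ac; exact degPrec_irrefl G h'ac
      · exfalso; rw [h1] at hbc; rw [h2] at h'bc; exact degPrec_asymm G hbc h'bc
      · exact h2.symm
    · exact h1
  subst hcc
  refine ⟨rfl, ?_, rfl⟩
  have hb : b = a ∨ b = b' ∨ b = c := by
    have : b ∈ ({a,b',c} : Finset V) := h ▸ (by simp)
    simpa using this
  rcases hb with h1|h1|h1
  · exact absurd h1.symm (degPrec_ne G hab)
  · exact h1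
  · exact absurd h1 (degPrec_ne G hbc)

lemma sort3 {a b c : V} (hab : a ≠ b) (hac : a ≠ c) (hbc : b ≠ c) :
    ∃ x y z, degPrec G x y ∧ degPrec G y z ∧ ({x, y, z} : Finset V) = {a, b, c} := by
  have perm1 : ({a,b,c} : Finset V) = {a,c,b} := by ext t; simp; tauto
  have perm2 : ({a,b,c} : Finset V) = {b,a,c} := by ext t; simp; tauto
  have perm3 : ({a,b,c} : Finset V) = {b,c,a} := by ext t; simp; tauto
  have perm4 : ({a,b,c} : Finset V) = {c,a,b} := by ext t; simp; tauto
  have perm5 : ({a,b,c} : Finset V) = {c,b,a} := by ext t; simp; tauto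
  rcases degPrec_total G hab with h1|h1 <;> rcases degPrec_total G hbc with h2|h2 <;>
    rcases degPrec_total G hac with h3|h3
  · exact ⟨a,b,c, h1, h2, rfl⟩
  · exact absurd (degPrec_trans G h1 h2) (fun h => degPrec_asymm G h h3)
  · exact ⟨a,c,b, h3, h2, perm1.symm⟩
  · exact ⟨c,a,b, h3, h1, perm4.symm⟩
  · exact ⟨b,a,c, h1, h3, perm2.symm⟩
  · exact ⟨b,c,a, h2, h3, perm3.symm⟩
  · exact absurd (degPrec_trans G h2 h1) (fun h => degPrec_asymm G h3 h)
  · exact ⟨c,b,a, h2, h1, perm5.symm⟩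

theorem main_count :
    ∑ v : V, ∑ u ∈ Nout G v, (Nout G v ∩ Nout G u).card = (G.cliqueFinset 3).card := by
  classical
  -- rewrite LHS as card of a triple set
  have lhs_eq : ∑ v : V, ∑ u ∈ Nout G v, (Nout G v ∩ Nout G u).card
      = ((univ : Finset (V × V × V)).filter
          (fun p => p.2.1 ∈ Nout G p.1 ∧ p.2.2 ∈ Nout G p.1 ∩ Nout G p.2.1)).card := by
    rw [Finset.card_filter, Fintype.sum_prod_type]
    refine Finset.sum_congr rfl fun v _ => ?_
    rw [Fintype.sum_prod_type]
    have step1 : ∀ u : V,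
        (∑ w : V, if u ∈ Nout G v ∧ w ∈ Nout G v ∩ Nout G u then 1 else 0)
          = if u ∈ Nout G v then (Nout G v ∩ Nout G u).card else 0 := by
      intro u; by_cases hu : u ∈ Nout G v
      · simp only [hu, true_and, Finset.sum_boole, Nat.cast_id]
        congr 1; ext w; simp [Finset.mem_inter]
      · simp [hu]
    simp only [step1, Finset.sum_ite_mem, Finset.univ_inter]
  rw [lhs_eq]
  apply Finset.card_bij (fun p _ => ({p.1, p.2.1, p.2.2} : Finset V))
  · rintro ⟨a,b,c⟩ hp
    simp only [mem_filter, mem_inter, Nout, mem_filter, SimpleGraph.mem_neighborFinset] at hp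
    obtain ⟨-, ⟨hab, h1⟩, ⟨hac, h2⟩, ⟨hbc, h3⟩⟩ := hp
    rw [SimpleGraph.mem_cliqueFinset_iff, SimpleGraph.is3Clique_triple_iff]
    exact ⟨hab, hac, hbc⟩
  · rintro ⟨a,b,c⟩ hp ⟨a',b',c'⟩ hp' h
    simp only [mem_filter, mem_inter, Nout, mem_filter, SimpleGraph.mem_neighborFinset] at hp hp'
    obtain ⟨-, ⟨hab, h1⟩, ⟨hac, h2⟩, ⟨hbc, h3⟩⟩ := hp
    obtain ⟨-, ⟨hab', h1'⟩, ⟨hac', h2'⟩, ⟨hbc', h3'⟩⟩ := hp'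
    obtain ⟨e1, e2, e3⟩ := triple_eq G h1 h3 h1' h3' h
    simp [e1, e2, e3]
  · intro t ht
    rw [SimpleGraph.mem_cliqueFinset_iff, SimpleGraph.is3Clique_iff] at ht
    obtain ⟨a, b, c, hab, hac, hbc, rfl⟩ := ht
    obtain ⟨x, y, z, hxy, hyz, hset⟩ := sort3 G hab.ne hac.ne hbc.ne
    refine ⟨(x, y, z), ?_, hset⟩
    have hx : x ∈ ({a,b,c} : Finset V) := hset ▸ (by simp)
    have hy : y ∈ ({a,b,c} : Finset V) := hset ▸ (by simp)
    have hz : z ∈ ({a,b,c} : Finset V) := hset ▸ (by simp)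
    have hadj : ∀ u v : V, u ∈ ({a,b,c} : Finset V) → v ∈ ({a,b,c} : Finset V) → u ≠ v →
        G.Adj u v := by
      intro u v hu hv huv
      simp only [mem_insert, mem_singleton] at hu hv
      rcases hu with rfl|rfl|rfl <;> rcases hv with rfl|rfl|rfl <;>
        first
        | exact absurd rfl huv
        | assumption
        | exact hab.symm
        | exact hac.symm
        | exact hbc.symm
    have hxz := degPrec_trans G hxy hyz
    simp only [mem_filter, mem_inter, Nout, mem_filter, SimpleGraph.mem_neighborFinset]
    exact ⟨mem_univ _, ⟨hadj x y hx hy (degPrec_ne G hxy), hxy⟩,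
      ⟨hadj x z hx hz (degPrec_ne G hxz), hxz⟩, ⟨hadj y z hy hz (degPrec_ne G hyz), hyz⟩⟩

end Helpers

/-- Correctness of the space-efficient parallel algorithm: summing each processor's count
`T_i = ∑_{v} ∑_{u ∈ N_v ∩ V_i} |N_v ∩ N_u|` over all processors gives the exact
number of triangles. -/
theorem parallel_space_efficient_correct {V : Type*} [Fintype V] [LinearOrder V]
    (G : SimpleGraph V) [DecidableRel G.Adj] (P : ℕ) (Vs : Fin P → Finset V)
    (hdisj : ∀ i j : Fin P, i ≠ j → Disjoint (Vs i) (Vs j))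
    (hcover : Finset.univ.biUnion Vs = (Finset.univ : Finset V)) :
    ∑ i : Fin P, ∑ v : V, ∑ u ∈ Nout G v ∩ Vs i, (Nout G v ∩ Nout G u).card
      = (G.cliqueFinset 3).card := by
  classical
  rw [Finset.sum_comm]
  have key : ∀ v : V, ∑ i : Fin P, ∑ u ∈ Nout G v ∩ Vs i, (Nout G v ∩ Nout G u).card
      = ∑ u ∈ Nout G v, (Nout G v ∩ Nout G u).card := by
    intro v
    rw [← Finset.sum_biUnion]
    · congr 1
      ext u
      simp only [Finset.mem_biUnion, Finset.mem_univ, true_and, Finset.mem_inter]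
      constructor
      · rintro ⟨i, h, -⟩; exact h
      · intro h
        have : u ∈ Finset.univ.biUnion Vs := hcover ▸ Finset.mem_univ u
        obtain ⟨i, -, hi⟩ := Finset.mem_biUnion.mp this
        exact ⟨i, h, hi⟩
    · intro i _ j _ hij
      exact Finset.disjoint_left.mpr fun u hu hu' =>
        Finset.disjoint_left.mp (hdisj i j hij) (Finset.mem_inter.mp hu).2
          (Finset.mem_inter.mp hu').2
  simp only [key]
  exact main_count G
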